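/- Let d ≥ 4, A = { (z₁,z₂) ∈ ℝ × ℝ^{d-1} : z₁ > 4, |z₂| ≤ √z₁ }, and V(z) = -(1/z₁) 1_A(z). Then sup_{x ∈ ℝ^d} ∫_{ℝ^d} |V(z)| |z - x|^{2-d} dz < ∞. -/

import Mathlib

/-!
Write `d = n + 1`, `x = (x₁, x₂)`, `M = max x₁ 4`, and split `ℝᵈ` at the ball `B(x, √M)`.
Inside the ball every point of `A` has `z₁ ≥ M / 2`, so `|V| ≤ 2 / M`, while
`∫_{B(x, √M)} |z - x|^{2-d} dz = d |B₁| M / 2`: the two factors of `M` cancel.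
Outside the ball `|z - x| ≥ max(|z₁ - x₁|, √M)`, and integrating out `z₂` over the ball
`|z₂| ≤ √z₁` of `ℝⁿ` leaves a multiple of `∫_{t > 4} t^{n/2 - 1} max(|t - x₁|, √M)^{1 - n} dt`.
On `t ≤ 2M` this is at most `(2M)^{n/2 - 1} ∫ max(|a|, √M)^{1 - n} da ≈ (2M)^{n/2 - 1} √M^{2 - n}`,
again independent of `M`; on `t > 2M` we have `|t - x₁| ≥ t / 2`, leaving the tail
`∫ t^{-n/2} dt`, finite because `n ≥ 3`.
-/

open MeasureTheory Real Set Metric Module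
open scoped ENNReal

lemma pow_sub_one_mul_rpow_two_sub {k : ℕ} (hk : 1 ≤ k) {r : ℝ} (hr : 0 < r) :
    r ^ (k - 1) * r ^ ((2 : ℝ) - k) = r := by
  rw [← rpow_natCast, ← rpow_add hr, Nat.cast_sub hk]
  norm_num

section RieszKernel

variable {E : Type*} [NormedAddCommGroup E] [NormedSpace ℝ E] [MeasurableSpace E] [BorelSpace E]
  [FiniteDimensional ℝ E] [Nontrivial E] (μ : Measure E) [μ.IsAddHaarMeasure]

lemma integral_ball_zero_norm_rpow_two_sub_finrank {R : ℝ} (hR : 0 ≤ R) :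
    ∫ y in ball (0 : E) R, ‖y‖ ^ ((2 : ℝ) - finrank ℝ E) ∂μ =
      finrank ℝ E * μ.real (ball 0 1) * (R ^ 2 / 2) := by
  have hball : ∀ y : E, (ball (0 : E) R).indicator (‖·‖ ^ ((2 : ℝ) - finrank ℝ E)) y =
      (Iio R).indicator (· ^ ((2 : ℝ) - finrank ℝ E)) ‖y‖ := fun y => by
    simp [indicator]
  have hradial : EqOn (fun r : ℝ => r ^ (finrank ℝ E - 1) •
      (Iio R).indicator (· ^ ((2 : ℝ) - finrank ℝ E)) r) ((Iio R).indicator fun r => r) (Ioi 0) :=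
    fun r (hr : 0 < r) => by
      by_cases hrR : r < R <;> simp [hrR, pow_sub_one_mul_rpow_two_sub finrank_pos hr]
  rw [← integral_indicator measurableSet_ball, funext hball, integral_fun_norm_addHaar,
    setIntegral_congr_fun measurableSet_Ioi hradial, integral_indicator measurableSet_Iio,
    Measure.restrict_restrict measurableSet_Iio, Iio_inter_Ioi, ← integral_Ioc_eq_integral_Ioo,
    ← intervalIntegral.integral_of_le hR, integral_id]
  simp [nsmul_eq_mul, mul_assoc]

lemma lintegral_ball_norm_sub_rpow_two_sub_finrank (x : E) {R : ℝ} (hR : 0 ≤ R) :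
    ∫⁻ z in ball x R, ENNReal.ofReal (‖z - x‖ ^ ((2 : ℝ) - finrank ℝ E)) ∂μ =
      ENNReal.ofReal (finrank ℝ E * μ.real (ball 0 1) * (R ^ 2 / 2)) := by
  have hint : IntegrableOn (‖·‖ ^ ((2 : ℝ) - finrank ℝ E)) (ball (0 : E) R) μ := by
    refine (integrableOn_fun_norm_addHaar μ (f := (· ^ ((2 : ℝ) - finrank ℝ E)))).2 <|
      (continuous_id.integrableOn_Icc.mono_set Ioo_subset_Icc_self).congr_fun
        (fun r hr => ?_) measurableSet_Ioo
    simp [pow_sub_one_mul_rpow_two_sub finrank_pos hr.1]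
  have hpre : (· - x) ⁻¹' ball (0 : E) R = ball x R := by
    ext z
    simp [dist_eq_norm]
  rw [← integral_ball_zero_norm_rpow_two_sub_finrank μ hR,
    ofReal_integral_eq_lintegral_ofReal hint (ae_of_all _ fun y => by positivity), ← hpre,
    (measurePreserving_sub_right μ x).setLIntegral_comp_preimage measurableSet_ball
      (f := fun y => ENNReal.ofReal (‖y‖ ^ ((2 : ℝ) - finrank ℝ E))) (by fun_prop)]

end RieszKernel

namespace EuclideanSpace

def splitHead (n : ℕ) : EuclideanSpace ℝ (Fin (n + 1)) ≃ᵐ ℝ × EuclideanSpace ℝ (Fin n) :=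
  (MeasurableEquiv.toLp 2 _).symm.trans <| (MeasurableEquiv.piFinSuccAbove (fun _ => ℝ) 0).trans <|
    MeasurableEquiv.prodCongr (MeasurableEquiv.refl ℝ) (MeasurableEquiv.toLp 2 _)

variable {n : ℕ}

lemma measurePreserving_splitHead : MeasurePreserving (splitHead n) :=
  (MeasurePreserving.id volume |>.prod (PiLp.volume_preserving_toLp (Fin n))).comp <|
    (measurePreserving_piFinSuccAbove (fun _ => volume) 0).comp
      (volume_preserving_symm_measurableEquiv_toLp _)

lemma splitHead_fst (z : EuclideanSpace ℝ (Fin (n + 1))) : (splitHead n z).1 = z 0 := rfl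

lemma norm_sq_eq_sq_add_norm_splitHead_snd_sq (z : EuclideanSpace ℝ (Fin (n + 1))) :
    ‖z‖ ^ 2 = z 0 ^ 2 + ‖(splitHead n z).2‖ ^ 2 := by
  simp [EuclideanSpace.norm_sq_eq, Fin.sum_univ_succ, splitHead, MeasurableEquiv.prodCongr,
    Fin.tail]

lemma lintegral_indicator_paraboloid {S : Set ℝ} (hS : MeasurableSet S) {g : ℝ → ℝ≥0∞}
    (hg : Measurable g) :
    ∫⁻ z : EuclideanSpace ℝ (Fin (n + 1)),
        {w | w 0 ∈ S ∧ ‖w‖ ^ 2 - w 0 ^ 2 ≤ w 0}.indicator (fun w => g (w 0)) z =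
      ∫⁻ t in S, g t * volume {y : EuclideanSpace ℝ (Fin n) | ‖y‖ ^ 2 ≤ t} := by
  set P : Set (ℝ × EuclideanSpace ℝ (Fin n)) := {q | ‖q.2‖ ^ 2 ≤ q.1}
  have hP : MeasurableSet P := measurableSet_le (by fun_prop) measurable_fst
  have hset : {w | w 0 ∈ S ∧ ‖w‖ ^ 2 - w 0 ^ 2 ≤ w 0} =
      splitHead n ⁻¹' (Prod.fst ⁻¹' S ∩ P) := by
    ext z
    simp only [mem_ofPred_eq, mem_preimage, mem_inter_iff, P, splitHead_fst,
      norm_sq_eq_sq_add_norm_splitHead_snd_sq z, add_sub_cancel_left]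
  have hsplit : ∀ z : EuclideanSpace ℝ (Fin (n + 1)),
      {w | w 0 ∈ S ∧ ‖w‖ ^ 2 - w 0 ^ 2 ≤ w 0}.indicator (fun w => g (w 0)) z =
        (Prod.fst ⁻¹' S ∩ P).indicator (fun q => g q.1) (splitHead n z) := fun z => by
    rw [hset, ← indicator_comp_right]
    rfl
  have hfiber : ∀ t, ∫⁻ y, (Prod.fst ⁻¹' S ∩ P).indicator (fun q => g q.1) (t, y) =
      S.indicator (fun t => g t * volume {y : EuclideanSpace ℝ (Fin n) | ‖y‖ ^ 2 ≤ t}) t := by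
    intro t
    by_cases ht : t ∈ S
    · rw [indicator_of_mem ht,
        ← lintegral_indicator_const (measurableSet_le (by fun_prop) measurable_const)]
      congr 1 with y
      simp [indicator, ht, P]
    · simp [indicator, ht]
  have hmeas : Measurable ((Prod.fst ⁻¹' S ∩ P).indicator fun q => g q.1) :=
    (hg.comp measurable_fst).indicator ((measurable_fst hS).inter hP)
  simp_rw [hsplit]
  rw [measurePreserving_splitHead.lintegral_comp hmeas, Measure.volume_eq_prod,
    lintegral_prod _ hmeas.aemeasurable]
  simp_rw [hfiber]
  rw [lintegral_indicator hS]

end EuclideanSpace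

lemma lintegral_Ioi_rpow {c s : ℝ} (hc : 0 < c) (hs : s < -1) :
    ∫⁻ t in Ioi c, ENNReal.ofReal (t ^ s) = ENNReal.ofReal (-c ^ (s + 1) / (s + 1)) := by
  rw [← ofReal_integral_eq_lintegral_ofReal (integrableOn_Ioi_rpow_of_lt hs hc)
      ((ae_restrict_mem measurableSet_Ioi).mono fun t ht => rpow_nonneg (hc.trans ht).le s),
    integral_Ioi_rpow_of_lt hs hc]

lemma lintegral_comp_abs_le {f : ℝ → ℝ≥0∞} (hf : Measurable f) :
    ∫⁻ a, f |a| ≤ 2 * ∫⁻ a in Ici 0, f a := by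
  have hsymm : ∀ a, f |a| ≤ (Ici 0).indicator f a + (Ici 0).indicator f (-a) := fun a => by
    rcases le_total 0 a with ha | ha
    · simp [abs_of_nonneg ha, indicator_of_mem (mem_Ici.2 ha)]
    · simp [abs_of_nonpos ha, indicator_of_mem (mem_Ici.2 (neg_nonneg.2 ha))]
  calc ∫⁻ a, f |a| ≤ ∫⁻ a, ((Ici 0).indicator f a + (Ici 0).indicator f (-a)) :=
        lintegral_mono hsymm
    _ = 2 * ∫⁻ a in Ici 0, f a := by
      rw [lintegral_add_left (hf.indicator measurableSet_Ici),
        lintegral_neg_eq_self fun a => (Ici 0).indicator f a,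
        lintegral_indicator measurableSet_Ici, two_mul]

lemma lintegral_max_abs_rpow_le {R e : ℝ} (hR : 0 < R) (he : e < -1) :
    ∫⁻ a, ENNReal.ofReal (max |a| R ^ e) ≤
      2 * ENNReal.ofReal (R ^ (e + 1) * (1 - 1 / (e + 1))) := by
  have hcore : ∫⁻ a in Icc 0 R, ENNReal.ofReal (max a R ^ e) = ENNReal.ofReal (R ^ (e + 1)) := by
    rw [setLIntegral_congr_fun measurableSet_Icc fun a ha => by rw [max_eq_right ha.2],
      setLIntegral_const, volume_Icc, sub_zero, ← ENNReal.ofReal_mul (by positivity),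
      ← rpow_add_one hR.ne']
  have htail : ∫⁻ a in Ioi R, ENNReal.ofReal (max a R ^ e) =
      ENNReal.ofReal (-R ^ (e + 1) / (e + 1)) := by
    rw [setLIntegral_congr_fun measurableSet_Ioi fun a (ha : R < a) => by rw [max_eq_left ha.le],
      lintegral_Ioi_rpow hR he]
  calc ∫⁻ a, ENNReal.ofReal (max |a| R ^ e) ≤ 2 * ∫⁻ a in Ici 0, ENNReal.ofReal (max a R ^ e) :=
        lintegral_comp_abs_le (f := fun a => ENNReal.ofReal (max a R ^ e)) (by fun_prop)
    _ ≤ 2 * ∫⁻ a in Icc 0 R ∪ Ioi R, ENNReal.ofReal (max a R ^ e) := by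
        gcongr
        exact Ici_subset_Icc_union_Ioi
    _ ≤ 2 * ((∫⁻ a in Icc 0 R, ENNReal.ofReal (max a R ^ e)) +
          ∫⁻ a in Ioi R, ENNReal.ofReal (max a R ^ e)) := by
        gcongr
        exact lintegral_union_le _ _ _
    _ = 2 * ENNReal.ofReal (R ^ (e + 1) * (1 - 1 / (e + 1))) := by
        rw [hcore, htail, ← ENNReal.ofReal_add (by positivity)
          (div_nonneg_of_nonpos (neg_nonpos.2 (by positivity)) (by linarith))]
        ring_nf

section ProfileIntegral

variable {p e x M : ℝ}

lemma lintegral_Ioc_rpow_mul_max_abs_sub_sqrt_rpow_le (hp : 0 ≤ p) (he : e < -1)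
    (hbal : p + (e + 1) / 2 ≤ 0) (hM : 1 ≤ M) :
    ∫⁻ t in Ioc 0 (2 * M), ENNReal.ofReal (t ^ p * max |t - x| √M ^ e) ≤
      2 * ENNReal.ofReal (2 ^ p * (1 - 1 / (e + 1))) := by
  have hscale : (2 * M) ^ p * √M ^ (e + 1) ≤ 2 ^ p := by
    rw [mul_rpow (by norm_num) (by linarith), sqrt_eq_rpow, ← rpow_mul (by linarith), mul_assoc,
      ← rpow_add (by linarith)]
    exact mul_le_of_le_one_right (by positivity) (rpow_le_one_of_one_le_of_nonpos hM (by linarith))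
  calc ∫⁻ t in Ioc 0 (2 * M), ENNReal.ofReal (t ^ p * max |t - x| √M ^ e)
      ≤ ∫⁻ t, ENNReal.ofReal ((2 * M) ^ p) * ENNReal.ofReal (max |t - x| √M ^ e) := by
        refine (setLIntegral_mono' measurableSet_Ioc fun t ht => ?_).trans
          (setLIntegral_le_lintegral _ _)
        rw [← ENNReal.ofReal_mul (by positivity)]
        gcongr
        exacts [ht.1.le, ht.2]
    _ = ENNReal.ofReal ((2 * M) ^ p) * ∫⁻ a, ENNReal.ofReal (max |a| √M ^ e) := by
        rw [lintegral_const_mul' _ _ ENNReal.ofReal_ne_top,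
          lintegral_sub_right_eq_self (fun a => ENNReal.ofReal (max |a| √M ^ e)) x]
    _ ≤ ENNReal.ofReal ((2 * M) ^ p) *
          (2 * ENNReal.ofReal (√M ^ (e + 1) * (1 - 1 / (e + 1)))) := by
        gcongr
        exact lintegral_max_abs_rpow_le (sqrt_pos.2 (by linarith)) he
    _ ≤ 2 * ENNReal.ofReal (2 ^ p * (1 - 1 / (e + 1))) := by
        rw [mul_left_comm, ← ENNReal.ofReal_mul (by positivity), ← mul_assoc]
        gcongr
        linarith [one_div_neg.2 (by linarith : e + 1 < 0)]

lemma lintegral_Ioi_rpow_mul_max_abs_sub_sqrt_rpow_le (he : e < -1) (hpe : p + e < -1)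
    (hM : 1 ≤ M) (hxM : x ≤ M) :
    ∫⁻ t in Ioi (2 * M), ENNReal.ofReal (t ^ p * max |t - x| √M ^ e) ≤
      ENNReal.ofReal (2 ^ (-e)) * ENNReal.ofReal (-1 / (p + e + 1)) := by
  calc ∫⁻ t in Ioi (2 * M), ENNReal.ofReal (t ^ p * max |t - x| √M ^ e)
      ≤ ∫⁻ t in Ioi 1, ENNReal.ofReal (2 ^ (-e)) * ENNReal.ofReal (t ^ (p + e)) := by
        refine (setLIntegral_mono' measurableSet_Ioi fun t (ht : 2 * M < t) => ?_).trans
          (lintegral_mono_set (Ioi_subset_Ioi (by linarith)))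
        have ht0 : 0 < t := by linarith
        have hmax : t / 2 ≤ max |t - x| √M :=
          le_max_of_le_left ((by linarith : t / 2 ≤ t - x).trans (le_abs_self _))
        rw [← ENNReal.ofReal_mul (by positivity), rpow_add ht0, mul_left_comm]
        gcongr
        calc max |t - x| √M ^ e ≤ (t / 2) ^ e :=
              rpow_le_rpow_of_nonpos (by positivity) hmax (by linarith)
          _ = 2 ^ (-e) * t ^ e := by
              rw [div_rpow ht0.le (by norm_num), rpow_neg (by norm_num)]
              ring
    _ = ENNReal.ofReal (2 ^ (-e)) * ENNReal.ofReal (-1 / (p + e + 1)) := by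
        rw [lintegral_const_mul' _ _ ENNReal.ofReal_ne_top, lintegral_Ioi_rpow one_pos hpe,
          one_rpow]

lemma exists_lintegral_rpow_mul_max_abs_sub_sqrt_rpow_le (hp : 0 ≤ p) (he : e < -1)
    (hpe : p + e < -1) (hbal : p + (e + 1) / 2 ≤ 0) :
    ∃ C < ∞, ∀ x M : ℝ, 1 ≤ M → x ≤ M →
      ∫⁻ t in Ioi 0, ENNReal.ofReal (t ^ p * max |t - x| √M ^ e) ≤ C := by
  refine ⟨2 * ENNReal.ofReal (2 ^ p * (1 - 1 / (e + 1))) +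
    ENNReal.ofReal (2 ^ (-e)) * ENNReal.ofReal (-1 / (p + e + 1)), by finiteness,
    fun x M hM hxM => ?_⟩
  rw [← Ioc_union_Ioi_eq_Ioi (by linarith : 0 ≤ 2 * M)]
  exact (lintegral_union_le _ _ _).trans <| add_le_add
    (lintegral_Ioc_rpow_mul_max_abs_sub_sqrt_rpow_le hp he hbal hM)
    (lintegral_Ioi_rpow_mul_max_abs_sub_sqrt_rpow_le he hpe hM hxM)

end ProfileIntegral

def parabolicRegion (n : ℕ) : Set (EuclideanSpace ℝ (Fin (n + 1))) :=
  {w | 4 < w 0 ∧ ‖w‖ ^ 2 - w 0 ^ 2 ≤ w 0}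

section parabolicRegion

variable {n : ℕ}

lemma abs_indicator_parabolicRegion_neg_inv (z : EuclideanSpace ℝ (Fin (n + 1))) :
    |(parabolicRegion n).indicator (fun w => -(w 0)⁻¹) z| =
      (parabolicRegion n).indicator (fun w => (w 0)⁻¹) z := by
  by_cases hz : z ∈ parabolicRegion n
  · rw [indicator_of_mem hz, indicator_of_mem hz, abs_neg, abs_inv,
      abs_of_pos (by linarith [hz.1])]
  · simp [indicator_of_notMem hz]

lemma half_max_le_of_mem_parabolicRegion {x z : EuclideanSpace ℝ (Fin (n + 1))}
    (hz : z ∈ parabolicRegion n) (hzx : z ∈ ball x √(max (x 0) 4)) :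
    max (x 0) 4 / 2 ≤ z 0 := by
  have hcoord : |z 0 - x 0| < √(max (x 0) 4) := by
    simpa using (PiLp.norm_apply_le (z - x) 0).trans_lt (mem_ball_iff_norm.1 hzx)
  rcases le_total (x 0) 4 with hx | hx
  · rw [max_eq_right hx]
    linarith [hz.1]
  · rw [max_eq_left hx] at hcoord ⊢
    have : √(x 0) ≤ x 0 / 2 := (sqrt_le_left (by linarith)).2 (by nlinarith)
    linarith [(abs_lt.1 hcoord).1]

lemma lintegral_ball_parabolicRegion_le (x : EuclideanSpace ℝ (Fin (n + 1))) :
    ∫⁻ z in ball x √(max (x 0) 4), ENNReal.ofReal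
        ((parabolicRegion n).indicator (fun w => (w 0)⁻¹) z * ‖z - x‖ ^ ((2 : ℝ) - (n + 1 : ℕ))) ≤
      ENNReal.ofReal ((n + 1) * volume.real (ball (0 : EuclideanSpace ℝ (Fin (n + 1))) 1)) := by
  set M := max (x 0) 4
  have hM : 4 ≤ M := le_max_right _ _
  have hpt : ∀ z ∈ ball x √M, ENNReal.ofReal
      ((parabolicRegion n).indicator (fun w => (w 0)⁻¹) z * ‖z - x‖ ^ ((2 : ℝ) - (n + 1 : ℕ))) ≤
        ENNReal.ofReal (2 / M) * ENNReal.ofReal (‖z - x‖ ^ ((2 : ℝ) - (n + 1 : ℕ))) := by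
    intro z hzx
    rw [← ENNReal.ofReal_mul (by positivity)]
    refine ENNReal.ofReal_le_ofReal (mul_le_mul_of_nonneg_right ?_ (by positivity))
    by_cases hz : z ∈ parabolicRegion n
    · rw [indicator_of_mem hz, ← inv_div]
      exact inv_anti₀ (by positivity) (half_max_le_of_mem_parabolicRegion hz hzx)
    · rw [indicator_of_notMem hz]
      positivity
  have hkernel := lintegral_ball_norm_sub_rpow_two_sub_finrank
    (volume : Measure (EuclideanSpace ℝ (Fin (n + 1)))) x (sqrt_nonneg M)
  rw [finrank_euclideanSpace_fin] at hkernel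
  calc _ ≤ ∫⁻ z in ball x √M,
        ENNReal.ofReal (2 / M) * ENNReal.ofReal (‖z - x‖ ^ ((2 : ℝ) - (n + 1 : ℕ))) :=
        setLIntegral_mono' measurableSet_ball hpt
    _ = ENNReal.ofReal (2 / M) * ENNReal.ofReal ((n + 1) *
          volume.real (ball (0 : EuclideanSpace ℝ (Fin (n + 1))) 1) * (√M ^ 2 / 2)) := by
        rw [lintegral_const_mul' _ _ ENNReal.ofReal_ne_top, hkernel, Nat.cast_add_one]
    _ = _ := by
        rw [← ENNReal.ofReal_mul (by positivity), sq_sqrt (by linarith)]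
        congr 1
        field_simp

lemma volume_setOf_norm_sq_le {t : ℝ} (ht : 0 ≤ t) :
    volume {y : EuclideanSpace ℝ (Fin n) | ‖y‖ ^ 2 ≤ t} =
      ENNReal.ofReal (t ^ ((n : ℝ) / 2)) * volume (ball (0 : EuclideanSpace ℝ (Fin n)) 1) := by
  have hball : {y : EuclideanSpace ℝ (Fin n) | ‖y‖ ^ 2 ≤ t} = closedBall 0 √t := by
    ext y
    simp [le_sqrt (norm_nonneg y) ht]
  rw [hball, Measure.addHaar_closedBall _ _ (sqrt_nonneg t), finrank_euclideanSpace_fin,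
    sqrt_eq_rpow, ← rpow_natCast, ← rpow_mul ht, one_div_mul_eq_div]

lemma exists_lintegral_compl_ball_parabolicRegion_le (hn : 3 ≤ n) :
    ∃ C < ∞, ∀ x : EuclideanSpace ℝ (Fin (n + 1)),
      ∫⁻ z in (ball x √(max (x 0) 4))ᶜ, ENNReal.ofReal
        ((parabolicRegion n).indicator (fun w => (w 0)⁻¹) z * ‖z - x‖ ^ ((2 : ℝ) - (n + 1 : ℕ))) ≤
        C := by
  have hn' : (3 : ℝ) ≤ n := by exact_mod_cast hn
  obtain ⟨C, hC, hprofile⟩ := exists_lintegral_rpow_mul_max_abs_sub_sqrt_rpow_le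
    (p := n / 2 - 1) (e := 1 - n) (by linarith) (by linarith) (by linarith) (by linarith)
  refine ⟨C * volume (ball (0 : EuclideanSpace ℝ (Fin n)) 1),
    ENNReal.mul_lt_top hC measure_ball_lt_top, fun x => ?_⟩
  set R := √(max (x 0) 4)
  have hR : 0 < R := sqrt_pos.2 (by positivity)
  set g : ℝ → ℝ≥0∞ := fun t => ENNReal.ofReal (t⁻¹ * max |t - x 0| R ^ (1 - n : ℝ))
  have hpt : ∀ z ∈ (ball x R)ᶜ, ENNReal.ofReal
      ((parabolicRegion n).indicator (fun w => (w 0)⁻¹) z * ‖z - x‖ ^ ((2 : ℝ) - (n + 1 : ℕ))) ≤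
        (parabolicRegion n).indicator (fun w => g (w 0)) z := by
    intro z hzx
    by_cases hz : z ∈ parabolicRegion n
    · rw [indicator_of_mem hz, indicator_of_mem hz]
      have hdist : max |z 0 - x 0| R ≤ ‖z - x‖ :=
        max_le (by simpa using PiLp.norm_apply_le (z - x) 0) (by simpa [dist_eq_norm] using hzx)
      refine ENNReal.ofReal_le_ofReal
        (mul_le_mul_of_nonneg_left ?_ (inv_pos.2 (by linarith [hz.1])).le)
      rw [Nat.cast_add_one, show (2 : ℝ) - (n + 1) = 1 - n by ring]
      exact rpow_le_rpow_of_nonpos (lt_max_of_lt_right hR) hdist (by linarith)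
    · simp [indicator_of_notMem hz]
  have hslice : ∀ t ∈ Ioi (4 : ℝ), g t * volume {y : EuclideanSpace ℝ (Fin n) | ‖y‖ ^ 2 ≤ t} =
      ENNReal.ofReal (t ^ ((n : ℝ) / 2 - 1) * max |t - x 0| R ^ (1 - n : ℝ)) *
        volume (ball (0 : EuclideanSpace ℝ (Fin n)) 1) := by
    intro t (ht : 4 < t)
    rw [volume_setOf_norm_sq_le (by linarith), ← mul_assoc, ← ENNReal.ofReal_mul (by positivity),
      ← rpow_neg_one, mul_right_comm, ← rpow_add (by linarith), neg_add_eq_sub]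
  calc _ ≤ ∫⁻ z, (parabolicRegion n).indicator (fun w => g (w 0)) z :=
        (setLIntegral_mono' measurableSet_ball.compl hpt).trans (setLIntegral_le_lintegral _ _)
    _ = ∫⁻ t in Ioi 4, g t * volume {y : EuclideanSpace ℝ (Fin n) | ‖y‖ ^ 2 ≤ t} :=
        EuclideanSpace.lintegral_indicator_paraboloid measurableSet_Ioi (by fun_prop)
    _ = ∫⁻ t in Ioi 4, ENNReal.ofReal (t ^ ((n : ℝ) / 2 - 1) * max |t - x 0| R ^ (1 - n : ℝ)) *
          volume (ball (0 : EuclideanSpace ℝ (Fin n)) 1) :=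
        setLIntegral_congr_fun measurableSet_Ioi hslice
    _ ≤ (∫⁻ t in Ioi 0, ENNReal.ofReal (t ^ ((n : ℝ) / 2 - 1) * max |t - x 0| R ^ (1 - n : ℝ))) *
          volume (ball (0 : EuclideanSpace ℝ (Fin n)) 1) := by
        rw [← lintegral_mul_const' _ _ measure_ball_lt_top.ne]
        exact lintegral_mono_set (Ioi_subset_Ioi (by norm_num))
    _ ≤ _ := by
        gcongr
        exact hprofile _ _ (by linarith [le_max_right (x 0) 4]) (le_max_left _ _)

end parabolicRegion

theorem stmt15 (d : ℕ) (hd : 4 ≤ d) :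
    (⨆ x : EuclideanSpace ℝ (Fin d),
        ∫⁻ z : EuclideanSpace ℝ (Fin d),
          ENNReal.ofReal
            (|Set.indicator {w : EuclideanSpace ℝ (Fin d) | 4 < w ⟨0, by omega⟩ ∧ ‖w‖^2 - (w ⟨0, by omega⟩)^2 ≤ w ⟨0, by omega⟩}
                (fun w => -(w ⟨0, by omega⟩)⁻¹) z| * ‖z - x‖ ^ ((2:ℝ) - d))) < ⊤ := by
  obtain ⟨n, rfl⟩ : ∃ n, d = n + 1 := ⟨d - 1, by omega⟩
  obtain ⟨C, hC, hfar⟩ := exists_lintegral_compl_ball_parabolicRegion_le (n := n) (by omega)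
  have hbound : ENNReal.ofReal ((n + 1) *
      volume.real (ball (0 : EuclideanSpace ℝ (Fin (n + 1))) 1)) + C < ∞ :=
    ENNReal.add_lt_top.2 ⟨ENNReal.ofReal_lt_top, hC⟩
  refine (iSup_le fun x => ?_).trans_lt hbound
  change ∫⁻ z, ENNReal.ofReal (|(parabolicRegion n).indicator (fun w => -(w 0)⁻¹) z| *
    ‖z - x‖ ^ ((2 : ℝ) - (n + 1 : ℕ))) ≤ _
  simp_rw [abs_indicator_parabolicRegion_neg_inv]
  rw [← lintegral_add_compl _ measurableSet_ball]
  exact add_le_add (lintegral_ball_parabolicRegion_le x) (hfar x)
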